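/- Let f be an n-oddomorphism of a finite simple graph G, let i ≠ j be two colours, and let P be a path of length at least 2 in the bipartite subgraph G[C_i, C_j] from an f-odd vertex x ∈ C_i to an f-odd vertex y ∈ C_j, with x and y non-adjacent in G. Let G′ be the graph obtained from G by deleting all edges of P and adding the edge xy (splitting off P). Then f is an n-oddomorphism of G′. -/

import Mathlib

open SimpleGraph

/-- `G` contains `H` as an immersion: an injective map `φ : V(H) → V(G)` together with a
family of pairwise edge-disjoint paths in `G`, one path with endpoints `φ u` and `φ v`
for each edge `uv` of `H`. -/
def ContainsImmersion {V W : Type*} (G : SimpleGraph V) (H : SimpleGraph W) : Prop :=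
  ∃ φ : W ↪ V, ∃ P : ∀ u v : W, H.Adj u v → G.Walk (φ u) (φ v),
    (∀ u v (h : H.Adj u v), (P u v h).IsPath) ∧
    (∀ u v (h : H.Adj u v) u' v' (h' : H.Adj u' v'),
      s(u, v) ≠ s(u', v') → ∀ e ∈ (P u v h).edges, e ∉ (P u' v' h').edges)

/-- A vertex `u` is `f`-odd: for every colour `c ≠ f u`, the number of neighbours of `u`
coloured `c` is odd. -/
def FOdd {V : Type*} {n : ℕ} (G : SimpleGraph V) (f : V → Fin n) (u : V) : Prop :=
  ∀ c : Fin n, c ≠ f u → Odd (Nat.card {w : V // G.Adj u w ∧ f w = c})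

/-- A vertex `u` is `f`-even: for every colour `c ≠ f u`, the number of neighbours of `u`
coloured `c` is even. -/
def FEven {V : Type*} {n : ℕ} (G : SimpleGraph V) (f : V → Fin n) (u : V) : Prop :=
  ∀ c : Fin n, c ≠ f u → Even (Nat.card {w : V // G.Adj u w ∧ f w = c})

/-- `f` is an `n`-oddomorphism of `G`: a proper `n`-colouring such that every vertex is
`f`-odd or `f`-even, and every colour class contains an odd number of `f`-odd vertices. -/
def IsOddomorphism {V : Type*} (G : SimpleGraph V) (n : ℕ) (f : V → Fin n) : Prop :=
  (∀ u w : V, G.Adj u w → f u ≠ f w) ∧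
  (∀ u : V, FOdd G f u ∨ FEven G f u) ∧
  (∀ c : Fin n, Odd (Nat.card {u : V // f u = c ∧ FOdd G f u}))

/-- The graph obtained from `G` by identifying `u₁` and `u₂` into the single vertex `u₁`,
whose neighbourhood is the symmetric difference `N(u₁) Δ N(u₂)`. -/
def mergedGraph {V : Type*} (G : SimpleGraph V) (u₁ u₂ : V) :
    SimpleGraph {v : V // v ≠ u₂} where
  Adj a b := a ≠ b ∧
    ((a.val = u₁ ∧ Xor' (G.Adj u₁ b.val) (G.Adj u₂ b.val)) ∨
     (b.val = u₁ ∧ Xor' (G.Adj u₁ a.val) (G.Adj u₂ a.val)) ∨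
     (a.val ≠ u₁ ∧ b.val ≠ u₁ ∧ G.Adj a.val b.val))
  symm := ⟨by
    rintro a b ⟨hab, h⟩
    refine ⟨hab.symm, ?_⟩
    rcases h with ⟨h1, h2⟩ | ⟨h1, h2⟩ | ⟨h1, h2, h3⟩
    · exact Or.inr (Or.inl ⟨h1, h2⟩)
    · exact Or.inl ⟨h1, h2⟩
    · exact Or.inr (Or.inr ⟨h2, h1, h3.symm⟩)⟩
  loopless := ⟨fun a h => h.1 rfl⟩

/-- The `Ps`-merger of `u₁` and `u₂`: identify `u₁` and `u₂` into a single vertex whose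
neighbourhood is the symmetric difference of the two neighbourhoods, then delete all the
edges of the paths in `Ps`. -/
noncomputable def PMerger {V : Type*} (G : SimpleGraph V) {u₁ u₂ : V} (hne : u₁ ≠ u₂)
    (Ps : Set (G.Walk u₁ u₂)) : SimpleGraph {v : V // v ≠ u₂} :=
  letI := Classical.decEq V
  (mergedGraph G u₁ u₂).deleteEdges
    {e' : Sym2 {v : V // v ≠ u₂} |
      ∃ p ∈ Ps, ∃ e ∈ p.edges,
        Sym2.map (fun v : V =>
          if hv : v = u₂ then (⟨u₁, hne⟩ : {v : V // v ≠ u₂}) else ⟨v, hv⟩) e = e'}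

/-- A tree decomposition of `G`. -/
structure TreeDecomp {V : Type*} (G : SimpleGraph V) where
  X : Type
  T : SimpleGraph X
  isTree : T.IsTree
  bag : X → Finset V
  mem_bag : ∀ v : V, ∃ x : X, v ∈ bag x
  edge_bag : ∀ u v : V, G.Adj u v → ∃ x : X, u ∈ bag x ∧ v ∈ bag x
  bag_connected : ∀ v : V, (T.induce {x : X | v ∈ bag x}).Connected

/-- The treewidth of `G`: the least `w` such that `G` has a tree decomposition all of whose
bags have size at most `w + 1`. -/
noncomputable def treewidth {V : Type*} (G : SimpleGraph V) : ℕ :=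
  sInf {w : ℕ | ∃ D : TreeDecomp G, ∀ x, (D.bag x).card ≤ w + 1}

/-- The bipartite subgraph `G[C_i, C_j]` of `G` spanned by the edges with one endpoint
coloured `i` and the other coloured `j`. -/
def bipSub {V : Type*} {n : ℕ} (G : SimpleGraph V) (f : V → Fin n) (i j : Fin n) :
    SimpleGraph V where
  Adj a b := G.Adj a b ∧ ((f a = i ∧ f b = j) ∨ (f a = j ∧ f b = i))
  symm := ⟨by
    rintro a b ⟨h, h2⟩
    exact ⟨h.symm, h2.symm.imp (fun h => ⟨h.2, h.1⟩) (fun h => ⟨h.2, h.1⟩)⟩⟩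
  loopless := ⟨fun a h => G.loopless.1 a h.1⟩

/-- Splitting off a two-coloured path of length at least 2 between two
non-adjacent `f`-odd vertices of different colours preserves being an `n`-oddomorphism. -/
theorem isOddomorphism_splitOffPath {V : Type} [Fintype V] (G : SimpleGraph V)
    (n : ℕ) (f : V → Fin n) (hf : IsOddomorphism G n f)
    (i j : Fin n) (hij : i ≠ j) (x y : V)
    (hx : f x = i) (hy : f y = j) (hxodd : FOdd G f x) (hyodd : FOdd G f y)
    (hnadj : ¬ G.Adj x y)
    (p : (bipSub G f i j).Walk x y) (hp : p.IsPath) (hlen : 2 ≤ p.length) :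
    IsOddomorphism (G.deleteEdges {e | e ∈ p.edges} ⊔ fromEdgeSet {s(x, y)}) n f := by
  classical
  obtain ⟨hprop, hpar0, hclass⟩ := hf
  have hxy : x ≠ y := by
    intro h; apply hij; rw [← hx, ← hy, h]
  -- edges of p are bipartite edges of G
  have hedge : ∀ a b : V, s(a, b) ∈ p.edges →
      G.Adj a b ∧ ((f a = i ∧ f b = j) ∨ (f a = j ∧ f b = i)) := fun a b h =>
    p.adj_of_mem_edges h
  have hnat : ∀ (P : V → Prop), Nat.card {w // P w} = (Finset.univ.filter P).card := by
    intro P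
    rw [Nat.card_eq_fintype_card]
    convert Fintype.card_subtype P
  -- counting edges of p at a vertex
  have hcount : ∀ u : V, (Finset.univ.filter (fun w => s(u, w) ∈ p.edges)).card
      = p.edges.countP (fun e => u ∈ e) := by
    intro u
    rw [List.countP_eq_length_filter, ← List.toFinset_card_of_nodup
      ((hp.isTrail.edges_nodup).filter _)]
    apply Finset.card_bij (fun w _ => s(u, w))
    · intro w hw
      simp only [Finset.mem_filter, Finset.mem_univ, true_and] at hw
      simp only [List.mem_toFinset, List.mem_filter, decide_eq_true_eq]
      exact ⟨hw, Sym2.mem_mk_left u w⟩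
    · intro a ha b hb hab
      exact Sym2.congr_right.mp hab
    · intro e he
      simp only [List.mem_toFinset, List.mem_filter, decide_eq_true_eq] at he
      obtain ⟨he1, he2⟩ := he
      refine ⟨Sym2.Mem.other he2, ?_, Sym2.other_spec he2⟩
      simp only [Finset.mem_filter, Finset.mem_univ, true_and]
      rw [Sym2.other_spec he2]; exact he1
  -- the key parity lemma
  have key : ∀ (u : V) (c : Fin n), c ≠ f u →
      Nat.card {w // (G.deleteEdges {e | e ∈ p.edges} ⊔ fromEdgeSet {s(x, y)}).Adj u w
        ∧ f w = c}
      ≡ Nat.card {w // G.Adj u w ∧ f w = c} [MOD 2] := by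
    intro u c hc
    set S : Finset V := Finset.univ.filter (fun w => G.Adj u w ∧ f w = c) with hSdef
    set S' : Finset V := Finset.univ.filter
      (fun w => (G.deleteEdges {e | e ∈ p.edges} ⊔ fromEdgeSet {s(x, y)}).Adj u w ∧ f w = c)
      with hS'def
    set D : Finset V := Finset.univ.filter (fun w => s(u, w) ∈ p.edges ∧ f w = c) with hDdef
    set A : Finset V := Finset.univ.filter (fun w => s(u, w) = s(x, y) ∧ f w = c) with hAdef
    have e1 : Nat.card {w // (G.deleteEdges {e | e ∈ p.edges} ⊔ fromEdgeSet {s(x, y)}).Adj u w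
        ∧ f w = c} = S'.card := by
      rw [hnat, hS'def]
      congr!
    have e2 : Nat.card {w // G.Adj u w ∧ f w = c} = S.card := by
      rw [hnat, hSdef]
      congr!
    rw [e1, e2]
    have hDS : D ⊆ S := by
      intro w hw
      simp only [hDdef, hSdef, Finset.mem_filter, Finset.mem_univ, true_and] at hw ⊢
      exact ⟨(hedge u w hw.1).1, hw.2⟩
    have hAS : ∀ w ∈ A, w ∉ S := by
      intro w hw hwS
      simp only [hAdef, hSdef, Finset.mem_filter, Finset.mem_univ, true_and] at hw hwS
      rcases Sym2.eq_iff.mp hw.1 with ⟨rfl, rfl⟩ | ⟨rfl, rfl⟩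
      · exact hnadj hwS.1
      · exact hnadj hwS.1.symm
    have hS' : S' = (S \ D) ∪ A := by
      ext w
      simp only [hS'def, hSdef, hDdef, hAdef, Finset.mem_union, Finset.mem_sdiff,
        Finset.mem_filter, Finset.mem_univ, true_and, SimpleGraph.sup_adj,
        SimpleGraph.deleteEdges_adj, SimpleGraph.fromEdgeSet_adj, Set.mem_setOf_eq,
        Set.mem_singleton_iff]
      constructor
      · rintro ⟨⟨hGa, hne⟩ | ⟨hxy', hne⟩, hfw⟩
        · exact Or.inl ⟨⟨hGa, hfw⟩, fun h => hne h.1⟩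
        · exact Or.inr ⟨hxy', hfw⟩
      · rintro (⟨⟨hGa, hfw⟩, hnd⟩ | ⟨hxy', hfw⟩)
        · exact ⟨Or.inl ⟨hGa, fun h => hnd ⟨h, hfw⟩⟩, hfw⟩
        · refine ⟨Or.inr ⟨hxy', ?_⟩, hfw⟩
          rcases Sym2.eq_iff.mp hxy' with ⟨rfl, rfl⟩ | ⟨rfl, rfl⟩
          · exact hxy
          · exact hxy.symm
    have hdisj : Disjoint (S \ D) A := by
      rw [Finset.disjoint_right]
      intro w hwA hwSD
      exact hAS w hwA (Finset.mem_sdiff.mp hwSD).1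
    have hcard : S'.card + D.card = S.card + A.card := by
      rw [hS', Finset.card_union_of_disjoint hdisj, Finset.card_sdiff_of_subset hDS]
      have := Finset.card_le_card hDS
      omega
    have hparDA : D.card % 2 = A.card % 2 := by
      by_cases hux : u = x
      · subst hux
        by_cases hcj : c = j
        · subst hcj
          have hA : A = {y} := by
            ext w
            simp only [hAdef, Finset.mem_filter, Finset.mem_univ, true_and,
              Finset.mem_singleton]
            constructor
            · rintro ⟨h1, _⟩
              rcases Sym2.eq_iff.mp h1 with ⟨_, rfl⟩ | ⟨h2, _⟩
              · rfl
              · exact absurd h2 hxy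
            · rintro rfl; exact ⟨rfl, hy⟩
          have hD : D = Finset.univ.filter (fun w => s(u, w) ∈ p.edges) := by
            ext w
            simp only [hDdef, Finset.mem_filter, Finset.mem_univ, true_and,
              and_iff_left_iff_imp]
            intro hw
            rcases (hedge u w hw).2 with ⟨_, h2⟩ | ⟨h1, _⟩
            · exact h2
            · exact absurd (hx ▸ h1) hij
          have hodd : ¬ Even (D.card) := by
            rw [hD, hcount]
            rw [hp.isTrail.even_countP_edges_iff u]
            push_neg
            exact ⟨hxy, fun h => absurd rfl h⟩
          rw [hA, Finset.card_singleton]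
            <;> rw [Nat.not_even_iff] at hodd
          omega
        · have hA : A = ∅ := by
            ext w
            simp only [hAdef, Finset.mem_filter, Finset.mem_univ, true_and,
              Finset.notMem_empty, iff_false, not_and]
            intro h1 h2
            rcases Sym2.eq_iff.mp h1 with ⟨_, rfl⟩ | ⟨h3, _⟩
            · exact hcj (h2 ▸ hy ▸ rfl)
            · exact hxy h3
          have hD : D = ∅ := by
            ext w
            simp only [hDdef, Finset.mem_filter, Finset.mem_univ, true_and,
              Finset.notMem_empty, iff_false, not_and]
            intro hw hfw
            rcases (hedge u w hw).2 with ⟨_, h2⟩ | ⟨h1, _⟩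
            · exact hcj (hfw ▸ h2 ▸ rfl)
            · exact hij (hx ▸ h1)
          rw [hA, hD]
      · by_cases huy : u = y
        · subst huy
          by_cases hci : c = i
          · subst hci
            have hA : A = {x} := by
              ext w
              simp only [hAdef, Finset.mem_filter, Finset.mem_univ, true_and,
                Finset.mem_singleton]
              constructor
              · rintro ⟨h1, _⟩
                rcases Sym2.eq_iff.mp h1 with ⟨h2, _⟩ | ⟨_, rfl⟩
                · exact absurd h2 hux
                · rfl
              · rintro rfl; exact ⟨Sym2.eq_swap, hx⟩
            have hD : D = Finset.univ.filter (fun w => s(u, w) ∈ p.edges) := by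
              ext w
              simp only [hDdef, Finset.mem_filter, Finset.mem_univ, true_and,
                and_iff_left_iff_imp]
              intro hw
              rcases (hedge u w hw).2 with ⟨h1, _⟩ | ⟨_, h2⟩
              · exact absurd (hy ▸ h1) (Ne.symm hij)
              · exact h2
            have hodd : ¬ Even (D.card) := by
              rw [hD, hcount]
              rw [hp.isTrail.even_countP_edges_iff u]
              push_neg
              exact ⟨hxy, fun _ => rfl⟩
            rw [hA, Finset.card_singleton]
              <;> rw [Nat.not_even_iff] at hodd
            omega
          · have hA : A = ∅ := by
              ext w
              simp only [hAdef, Finset.mem_filter, Finset.mem_univ, true_and,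
                Finset.notMem_empty, iff_false, not_and]
              intro h1 h2
              rcases Sym2.eq_iff.mp h1 with ⟨h3, _⟩ | ⟨_, rfl⟩
              · exact hux h3
              · exact hci (h2 ▸ hx ▸ rfl)
            have hD : D = ∅ := by
              ext w
              simp only [hDdef, Finset.mem_filter, Finset.mem_univ, true_and,
                Finset.notMem_empty, iff_false, not_and]
              intro hw hfw
              rcases (hedge u w hw).2 with ⟨h1, _⟩ | ⟨_, h2⟩
              · exact (Ne.symm hij) (hy ▸ h1)
              · exact hci (hfw ▸ h2 ▸ rfl)
            rw [hA, hD]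
        · -- u is not an endpoint
          have hA : A = ∅ := by
            ext w
            simp only [hAdef, Finset.mem_filter, Finset.mem_univ, true_and,
              Finset.notMem_empty, iff_false, not_and]
            intro h1 _
            rcases Sym2.eq_iff.mp h1 with ⟨h2, _⟩ | ⟨h2, _⟩
            · exact hux h2
            · exact huy h2
          have hDeven : Even (D.card) := by
            by_cases hfull : (f u = i ∧ c = j) ∨ (f u = j ∧ c = i)
            · have hD : D = Finset.univ.filter (fun w => s(u, w) ∈ p.edges) := by
                ext w
                simp only [hDdef, Finset.mem_filter, Finset.mem_univ, true_and,
                  and_iff_left_iff_imp]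
                intro hw
                rcases (hedge u w hw).2 with ⟨h1, h2⟩ | ⟨h1, h2⟩ <;>
                  rcases hfull with ⟨g1, g2⟩ | ⟨g1, g2⟩
                · rw [g2]; exact h2
                · exact absurd (h1.symm.trans g1) hij
                · exact absurd (g1.symm.trans h1) hij
                · rw [g2]; exact h2
              rw [hD, hcount, hp.isTrail.even_countP_edges_iff u]
              exact fun _ => ⟨hux, huy⟩
            · have hD : D = ∅ := by
                ext w
                simp only [hDdef, Finset.mem_filter, Finset.mem_univ, true_and,
                  Finset.notMem_empty, iff_false, not_and]
                intro hw hfw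
                rcases (hedge u w hw).2 with ⟨h1, h2⟩ | ⟨h1, h2⟩
                · exact hfull (Or.inl ⟨h1, hfw ▸ h2 ▸ rfl⟩)
                · exact hfull (Or.inr ⟨h1, hfw ▸ h2 ▸ rfl⟩)
              rw [hD]; exact ⟨0, rfl⟩
          rw [hA, Finset.card_empty]
          rcases hDeven with ⟨k, hk⟩
          omega
    have hgoal : S'.card % 2 = S.card % 2 := by omega
    exact hgoal
  -- transfer FOdd / FEven
  have hFOdd : ∀ u : V,
      (FOdd (G.deleteEdges {e | e ∈ p.edges} ⊔ fromEdgeSet {s(x, y)}) f u ↔ FOdd G f u) := by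
    intro u
    constructor <;> intro h c hc <;> have h1 := h c hc <;> have h2 := key u c hc <;>
      rw [Nat.odd_iff] at h1 ⊢ <;> unfold Nat.ModEq at h2 <;> omega
  have hFEven : ∀ u : V,
      (FEven (G.deleteEdges {e | e ∈ p.edges} ⊔ fromEdgeSet {s(x, y)}) f u ↔ FEven G f u) := by
    intro u
    constructor <;> intro h c hc <;> have h1 := h c hc <;> have h2 := key u c hc <;>
      rw [Nat.even_iff] at h1 ⊢ <;> unfold Nat.ModEq at h2 <;> omega
  refine ⟨?_, ?_, ?_⟩
  · intro u w h
    rcases h with h | h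
    · exact hprop u w (SimpleGraph.deleteEdges_adj.mp h).1
    · rw [SimpleGraph.fromEdgeSet_adj, Set.mem_singleton_iff] at h
      rcases Sym2.eq_iff.mp h.1 with ⟨rfl, rfl⟩ | ⟨rfl, rfl⟩
      · rw [hx, hy]; exact hij
      · rw [hx, hy]; exact Ne.symm hij
  · intro u
    rcases hpar0 u with h | h
    · exact Or.inl ((hFOdd u).mpr h)
    · exact Or.inr ((hFEven u).mpr h)
  · intro c
    have : Nat.card {u : V // f u = c ∧
        FOdd (G.deleteEdges {e | e ∈ p.edges} ⊔ fromEdgeSet {s(x, y)}) f u}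
        = Nat.card {u : V // f u = c ∧ FOdd G f u} := by
      apply Nat.card_congr
      exact Equiv.subtypeEquivRight (fun u => by rw [hFOdd u])
    rw [this]
    exact hclass c
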